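/- arXiv:2503.10948 — 6 statements merged into one kernel-verified Lean document; each statement's English description precedes it below -/
import Mathlib

section
/- For the directed graph on ℕ where vertex i has one edge to 2i-2 (only if i ≥ 2), two edges to 2i-1, and one edge to 2i, the set of endpoints of paths of length n starting at vertex 1 is exactly {1, 2, ..., 2^n}, and for i > 1 the set of endpoints of paths of length n starting at i is exactly {2^n(i-2)+2, ..., 2^n i}. -/
/-- One directed step in the index graph: from `i` one can go to `2i-2`
(only when `i ≥ 2`), to `2i-1` (two parallel edges, irrelevant for reachability),
or to `2i`. -/
def IndexStep (i j : ℕ) : Prop :=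
  (2 ≤ i ∧ j = 2 * i - 2) ∨ j = 2 * i - 1 ∨ j = 2 * i

/-- `Reach n i j` : there is a directed path of length `n` from `i` to `j`. -/
def Reach : ℕ → ℕ → ℕ → Prop
  | 0, i, j => j = i
  | n + 1, i, j => ∃ k, IndexStep i k ∧ Reach n k j

/-!
The endpoints of length-`n` paths from `i ≥ 2` form the interval `[2ⁿ(i-2)+2, 2ⁿi]`. A first step
leads to `2i-2`, `2i-1` or `2i`, and the corresponding intervals for `n` steps overlap or abut, so
their union is again an interval, with endpoints `2ⁿ(2i-4)+2 = 2ⁿ⁺¹(i-2)+2` and `2ⁿ·2i = 2ⁿ⁺¹i`.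
From `1` the first step leads to `1` or `2`, and `[1, 2ⁿ] ∪ [2, 2ⁿ⁺¹] = [1, 2ⁿ⁺¹]`.
-/

lemma exists_mem_Icc_iff_of_chain {L U : ℕ → ℕ} (hL : Monotone L) (hU : Monotone U) {a b j : ℕ}
    (hchain : ∀ k, a ≤ k → L (k + 1) ≤ U k + 1) (hab : a ≤ b) :
    (∃ k, a ≤ k ∧ k ≤ b ∧ L k ≤ j ∧ j ≤ U k) ↔ L a ≤ j ∧ j ≤ U b := by
  constructor
  · rintro ⟨k, hak, hkb, hLj, hjU⟩
    exact ⟨(hL hak).trans hLj, hjU.trans (hU hkb)⟩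
  · rintro ⟨hLj, hjU⟩
    induction b, hab using Nat.le_induction with
    | base => exact ⟨a, le_rfl, le_rfl, hLj, hjU⟩
    | succ b hab ih =>
      by_cases hjb : j ≤ U b
      · obtain ⟨k, hak, hkb, hk⟩ := ih hjb
        exact ⟨k, hak, hkb.trans b.le_succ, hk⟩
      · exact ⟨b + 1, hab.trans b.le_succ, le_rfl, by have := hchain b hab; omega, hjU⟩

lemma indexStep_iff_of_two_le {i k : ℕ} (hi : 2 ≤ i) :
    IndexStep i k ↔ 2 * i - 2 ≤ k ∧ k ≤ 2 * i := by
  unfold IndexStep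
  omega

lemma indexStep_one_iff {k : ℕ} : IndexStep 1 k ↔ k = 1 ∨ k = 2 := by
  unfold IndexStep
  omega

lemma reach_iff_of_two_le (n : ℕ) {i j : ℕ} (hi : 2 ≤ i) :
    Reach n i j ↔ 2 ^ n * (i - 2) + 2 ≤ j ∧ j ≤ 2 ^ n * i := by
  induction n generalizing i with
  | zero =>
    simp only [Reach, pow_zero, one_mul]
    omega
  | succ n ih =>
    have hchain : ∀ k, 2 * i - 2 ≤ k → 2 ^ n * (k + 1 - 2) + 2 ≤ 2 ^ n * k + 1 := by
      intro k hk
      have : 2 ^ n * (k + 1 - 2) + 2 ^ n = 2 ^ n * k := by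
        rw [← mul_add_one]
        congr 1
        omega
      have := Nat.one_le_two_pow (n := n)
      omega
    calc Reach (n + 1) i j
        ↔ ∃ k, 2 * i - 2 ≤ k ∧ k ≤ 2 * i ∧ 2 ^ n * (k - 2) + 2 ≤ j ∧ j ≤ 2 ^ n * k := by
          simp only [Reach, indexStep_iff_of_two_le hi, and_assoc]
          refine exists_congr fun k => and_congr_right fun hk => and_congr_right fun _ => ?_
          exact ih (by omega)
      _ ↔ 2 ^ n * (2 * i - 2 - 2) + 2 ≤ j ∧ j ≤ 2 ^ n * (2 * i) :=
          exists_mem_Icc_iff_of_chain (fun _ _ h => by gcongr) (fun _ _ h => by gcongr)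
            hchain (by omega)
      _ ↔ 2 ^ (n + 1) * (i - 2) + 2 ≤ j ∧ j ≤ 2 ^ (n + 1) * i := by
          rw [show 2 * i - 2 - 2 = 2 * (i - 2) by omega, pow_succ, mul_assoc, mul_assoc]

lemma reach_one_iff (n : ℕ) {j : ℕ} : Reach n 1 j ↔ 1 ≤ j ∧ j ≤ 2 ^ n := by
  induction n with
  | zero =>
    simp only [Reach, pow_zero]
    omega
  | succ n ih =>
    simp only [Reach, indexStep_one_iff, or_and_right, exists_or, exists_eq_left]
    rw [ih, reach_iff_of_two_le n le_rfl, pow_succ]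
    omega

theorem stmt0 (n : ℕ) :
    (∀ j : ℕ, Reach n 1 j ↔ 1 ≤ j ∧ j ≤ 2 ^ n) ∧
    (∀ i : ℕ, 1 < i → ∀ j : ℕ,
      Reach n i j ↔ 2 ^ n * (i - 2) + 2 ≤ j ∧ j ≤ 2 ^ n * i) :=
  ⟨fun _ => reach_one_iff n, fun _ hi _ => reach_iff_of_two_le n hi⟩
end

section
/- Fix n ∈ ℕ and x ∈ V^(n) ∖ {0,1}, where V^(n) = {k/2^n : 0 ≤ k ≤ 2^n}, and let 1/2 < s < 1. Then the sums S_n(x) = ∑_{y ∈ V^(n), y ≠ x} |x - y|^{1-2s} μ^(n)(y) are nondecreasing in n (for n such that x ∈ V^(n)), and hence S_n(x) ≤ ∫_0^1 |x-y|^{1-2s} dy. -/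
noncomputable def dyadicMu (n k : ℕ) : ℝ :=
  if k = 0 ∨ k = 2 ^ n then (1 / 2 : ℝ) ^ (n + 1) else (1 / 2 : ℝ) ^ n

/-- `S5 s x n = ∑_{y ∈ V^(n), y ≠ x} |x - y|^{1-2s} μ^(n)(y)`. -/
noncomputable def S5 (s x : ℝ) (n : ℕ) : ℝ :=
  ∑ l ∈ (Finset.range (2 ^ n + 1)).filter (fun l : ℕ => ((l : ℝ) / 2 ^ n) ≠ x),
    |x - (l : ℝ) / 2 ^ n| ^ (1 - 2 * s) * dyadicMu n l

/-! With `r = 1 - 2s ≤ 0`, the integrand `y ↦ |x - y| ^ r` grows as `y` approaches `x`.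
Pair each grid point `l ≠ k` of level `n` with the grid cell `[c, c + 1] / 2 ^ n` next to it on
the side of `x = k / 2 ^ n` (`c = cellToward k l`). Distinct points get distinct cells, and on its
cell the integrand is at least its value at `l / 2 ^ n`, while the weight `μ⁽ⁿ⁾(l)` is at most the
cell length. Passing to level `n + 1`, the even points reproduce half of `S_n`, and the midpoints of
the paired cells dominate the other half; comparing instead with the integrals over the paired
cells gives `S_n ≤ ∫₀¹`. -/

theorem Finset.sum_comp_add_sum_comp_le {ι κ M : Type*} [DecidableEq κ] [AddCommMonoid M]
    [PartialOrder M] [IsOrderedAddMonoid M] {s : Finset ι} {t : Finset κ} {f g : ι → κ}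
    {h : κ → M} (hf : Set.InjOn f s) (hg : Set.InjOn g s) (hfg : ∀ i ∈ s, ∀ j ∈ s, f i ≠ g j)
    (hft : ∀ i ∈ s, f i ∈ t) (hgt : ∀ i ∈ s, g i ∈ t) (hh : ∀ j ∈ t, 0 ≤ h j) :
    ∑ i ∈ s, (h (f i) + h (g i)) ≤ ∑ j ∈ t, h j := by
  have hdisj : Disjoint (s.image f) (s.image g) := by
    simp only [Finset.disjoint_left, Finset.mem_image]
    rintro _ ⟨i, hi, rfl⟩ ⟨j, hj, hji⟩
    exact hfg i hi j hj hji.symm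
  rw [Finset.sum_add_distrib, ← Finset.sum_image hf, ← Finset.sum_image hg,
    ← Finset.sum_union hdisj]
  refine Finset.sum_le_sum_of_subset_of_nonneg (fun j hj => ?_) (fun j hj _ => hh j hj)
  simp only [Finset.mem_union, Finset.mem_image] at hj
  rcases hj with ⟨i, hi, rfl⟩ | ⟨i, hi, rfl⟩
  exacts [hft i hi, hgt i hi]

theorem Finset.sum_comp_le_sum_of_injOn {ι κ M : Type*} [DecidableEq κ] [AddCommMonoid M]
    [PartialOrder M] [IsOrderedAddMonoid M] {s : Finset ι} {t : Finset κ} {f : ι → κ}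
    {h : κ → M} (hf : Set.InjOn f s) (hft : ∀ i ∈ s, f i ∈ t) (hh : ∀ j ∈ t, 0 ≤ h j) :
    ∑ i ∈ s, h (f i) ≤ ∑ j ∈ t, h j := by
  rw [← Finset.sum_image hf]
  refine Finset.sum_le_sum_of_subset_of_nonneg (fun j hj => ?_) (fun j hj _ => hh j hj)
  obtain ⟨i, hi, rfl⟩ := Finset.mem_image.mp hj
  exact hft i hi

def cellToward (k l : ℕ) : ℕ := if l < k then l else l - 1

theorem cellToward_injOn (k : ℕ) : Set.InjOn (cellToward k) {l | l ≠ k} := by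
  intro a ha b hb hab
  simp only [Set.mem_ofPred_eq, cellToward] at ha hb hab
  split_ifs at hab <;> omega

theorem cellToward_lt {k l n : ℕ} (hk : k ≤ n) (hl : l ≤ n) (hlk : l ≠ k) :
    cellToward k l < n := by
  unfold cellToward; split_ifs <;> omega

theorem cellToward_mem_uIcc {k l : ℕ} (hlk : l ≠ k) :
    (cellToward k l : ℝ) ∈ Set.uIcc (l : ℝ) k ∧ (cellToward k l + 1 : ℝ) ∈ Set.uIcc (l : ℝ) k := by
  simp only [Set.mem_uIcc, cellToward]
  split_ifs with h
  · have : (l : ℝ) + 1 ≤ k := by exact_mod_cast h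
    constructor <;> left <;> constructor <;> linarith
  · have h1 : 1 ≤ l := by omega
    have : (k : ℝ) + 1 ≤ l := by exact_mod_cast (show k + 1 ≤ l by omega)
    push_cast [Nat.cast_sub h1]
    constructor <;> right <;> constructor <;> linarith

theorem abs_sub_pos_and_le_of_mem_cellToward {k l : ℕ} (hlk : l ≠ k) {d y : ℝ} (hd : 0 < d)
    (hy : y ∈ Set.Ioo ((cellToward k l : ℝ) / d) ((cellToward k l + 1) / d)) :
    0 < |k / d - y| ∧ |k / d - y| ≤ |k / d - l / d| := by
  set c := cellToward k l
  constructor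
  · refine abs_pos.mpr (sub_ne_zero.mpr fun hky => ?_)
    rw [← hky, Set.mem_Ioo, div_lt_div_iff_of_pos_right hd, div_lt_div_iff_of_pos_right hd] at hy
    obtain ⟨h1, h2⟩ := hy
    have : c < k := by exact_mod_cast h1
    have : k < c + 1 := by exact_mod_cast h2
    omega
  · have hmem : ∀ t ∈ Set.uIcc (l : ℝ) k, t / d ∈ Set.uIcc ((l : ℝ) / d) (k / d) := by
      intro t ht
      rw [← Set.image_div_const_uIcc]
      exact Set.mem_image_of_mem _ ht
    have hsub : Set.uIcc ((c : ℝ) / d) ((c + 1) / d) ⊆ Set.uIcc ((l : ℝ) / d) (k / d) :=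
      Set.uIcc_subset_uIcc (hmem _ (cellToward_mem_uIcc hlk).1)
        (hmem _ (cellToward_mem_uIcc hlk).2)
    exact Set.abs_sub_right_of_mem_uIcc (hsub (Set.Icc_subset_uIcc (Set.Ioo_subset_Icc_self hy)))

theorem rpow_abs_sub_le_of_mem_cellToward {k l : ℕ} (hlk : l ≠ k) {d y r : ℝ} (hd : 0 < d)
    (hr : r ≤ 0) (hy : y ∈ Set.Ioo ((cellToward k l : ℝ) / d) ((cellToward k l + 1) / d)) :
    |k / d - l / d| ^ r ≤ |k / d - y| ^ r :=
  Real.rpow_le_rpow_of_nonpos (abs_sub_pos_and_le_of_mem_cellToward hlk hd hy).1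
    (abs_sub_pos_and_le_of_mem_cellToward hlk hd hy).2 hr

theorem dyadicMu_nonneg (n k : ℕ) : 0 ≤ dyadicMu n k := by
  unfold dyadicMu; split <;> positivity

theorem dyadicMu_le (n k : ℕ) : dyadicMu n k ≤ (1 / 2 : ℝ) ^ n := by
  unfold dyadicMu; split
  · exact pow_le_pow_of_le_one (by norm_num) (by norm_num) n.le_succ
  · exact le_rfl

theorem dyadicMu_two_mul (n l : ℕ) : dyadicMu (n + 1) (2 * l) = dyadicMu n l / 2 := by
  have h : 2 * l = 0 ∨ 2 * l = 2 ^ (n + 1) ↔ l = 0 ∨ l = 2 ^ n := by rw [pow_succ]; omega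
  unfold dyadicMu
  rw [if_congr h rfl rfl]
  split <;> ring

theorem dyadicMu_two_mul_add_one (n l : ℕ) :
    dyadicMu (n + 1) (2 * l + 1) = (1 / 2 : ℝ) ^ (n + 1) := by
  have h : ¬(2 * l + 1 = 0 ∨ 2 * l + 1 = 2 ^ (n + 1)) := by rw [pow_succ]; omega
  unfold dyadicMu
  rw [if_neg h]

noncomputable def dyadicTerm (s x : ℝ) (n l : ℕ) : ℝ :=
  |x - (l : ℝ) / 2 ^ n| ^ (1 - 2 * s) * dyadicMu n l

theorem dyadicTerm_nonneg (s x : ℝ) (n l : ℕ) : 0 ≤ dyadicTerm s x n l :=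
  mul_nonneg (Real.rpow_nonneg (abs_nonneg _) _) (dyadicMu_nonneg n l)

theorem S5_eq_sum_erase (s x : ℝ) {n k : ℕ} (hx : x = k / 2 ^ n) :
    S5 s x n = ∑ l ∈ (Finset.range (2 ^ n + 1)).erase k, dyadicTerm s x n l := by
  have hfilter : (Finset.range (2 ^ n + 1)).filter (fun l : ℕ => (l : ℝ) / 2 ^ n ≠ x)
      = (Finset.range (2 ^ n + 1)).erase k := by
    ext l
    simp only [Finset.mem_filter, Finset.mem_erase, hx, ne_eq,
      div_left_inj' (pow_ne_zero n (two_ne_zero (α := ℝ))), Nat.cast_inj]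
    tauto
  rw [S5, hfilter]
  rfl

theorem dyadicTerm_le_even_add_odd {s : ℝ} (hs : 1 / 2 ≤ s) {x : ℝ} {n k l : ℕ}
    (hx : x = k / 2 ^ n) (hlk : l ≠ k) :
    dyadicTerm s x n l ≤
      dyadicTerm s x (n + 1) (2 * l) + dyadicTerm s x (n + 1) (2 * cellToward k l + 1) := by
  set c := cellToward k l
  have hd : (0 : ℝ) < 2 ^ n := by positivity
  have heven : dyadicTerm s x (n + 1) (2 * l) = dyadicTerm s x n l / 2 := by
    have : ((2 * l : ℕ) : ℝ) / 2 ^ (n + 1) = l / 2 ^ n := by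
      push_cast; rw [pow_succ]; field_simp
    rw [dyadicTerm, dyadicTerm, this, dyadicMu_two_mul, mul_div_assoc]
  have hmid :
      ((2 * c + 1 : ℕ) : ℝ) / 2 ^ (n + 1) ∈ Set.Ioo ((c : ℝ) / 2 ^ n) ((c + 1) / 2 ^ n) := by
    rw [pow_succ, Set.mem_Ioo]; push_cast
    constructor
    · rw [div_lt_div_iff₀ hd (by positivity)]; nlinarith
    · rw [div_lt_div_iff₀ (by positivity) hd]; nlinarith
  have hodd : dyadicTerm s x n l / 2 ≤ dyadicTerm s x (n + 1) (2 * c + 1) := by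
    rw [dyadicTerm, dyadicTerm, dyadicMu_two_mul_add_one, mul_div_assoc, hx]
    refine mul_le_mul (rpow_abs_sub_le_of_mem_cellToward hlk hd (by linarith) hmid) ?_
      (by linarith [dyadicMu_nonneg n l]) (Real.rpow_nonneg (abs_nonneg _) _)
    rw [pow_succ]
    linarith [dyadicMu_le n l]
  rw [heven]
  linarith

theorem S5_le_S5_succ {s : ℝ} (hs : 1 / 2 ≤ s) {x : ℝ} {n k : ℕ} (hk : k ≤ 2 ^ n)
    (hx : x = k / 2 ^ n) : S5 s x n ≤ S5 s x (n + 1) := by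
  have hx' : x = ((2 * k : ℕ) : ℝ) / 2 ^ (n + 1) := by
    rw [hx, pow_succ]; push_cast; field_simp
  have hpow : 2 ^ (n + 1) = 2 * 2 ^ n := by rw [pow_succ]; ring
  rw [S5_eq_sum_erase s x hx, S5_eq_sum_erase s x hx']
  refine (Finset.sum_le_sum fun l hl =>
    dyadicTerm_le_even_add_odd hs hx (Finset.ne_of_mem_erase hl)).trans ?_
  refine Finset.sum_comp_add_sum_comp_le (fun a _ b _ hab => by omega)
    (fun a ha b hb hab => cellToward_injOn k (Finset.ne_of_mem_erase ha)
      (Finset.ne_of_mem_erase hb) (by omega)) (fun a _ b _ => by omega) (fun l hl => ?_)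
    (fun l hl => ?_) (fun j _ => dyadicTerm_nonneg s x (n + 1) j)
  · simp only [Finset.mem_erase, Finset.mem_range] at hl ⊢
    omega
  · simp only [Finset.mem_erase, Finset.mem_range] at hl ⊢
    have := cellToward_lt hk (by omega : l ≤ 2 ^ n) hl.1
    omega

theorem intervalIntegrable_abs_rpow {r : ℝ} (hr : -1 < r) (a b : ℝ) :
    IntervalIntegrable (fun t : ℝ => |t| ^ r) MeasureTheory.volume a b := by
  have hnonneg :
      ∀ c : ℝ, 0 ≤ c → IntervalIntegrable (fun t : ℝ => |t| ^ r) MeasureTheory.volume 0 c :=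
    fun c hc => (intervalIntegral.intervalIntegrable_rpow' hr).congr fun t ht => by
      rw [Set.uIoc_of_le hc] at ht
      simp only [abs_of_pos ht.1]
  have hzero : ∀ c : ℝ, IntervalIntegrable (fun t : ℝ => |t| ^ r) MeasureTheory.volume 0 c := by
    intro c
    rcases le_total 0 c with hc | hc
    · exact hnonneg c hc
    · simpa using (IntervalIntegrable.iff_comp_neg (by simp)).mp (hnonneg (-c) (by linarith))
  exact (hzero a).symm.trans (hzero b)

theorem intervalIntegrable_abs_sub_rpow {r : ℝ} (hr : -1 < r) (x a b : ℝ) :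
    IntervalIntegrable (fun y : ℝ => |x - y| ^ r) MeasureTheory.volume a b := by
  simpa using (intervalIntegrable_abs_rpow hr (x - a) (x - b)).comp_sub_left x

theorem dyadicTerm_le_integral_cellToward {s : ℝ} (hs : 1 / 2 ≤ s) (hs1 : s < 1) {x : ℝ}
    {n k l : ℕ} (hx : x = k / 2 ^ n) (hlk : l ≠ k) :
    dyadicTerm s x n l ≤
      ∫ y in (cellToward k l : ℝ) / 2 ^ n..(cellToward k l + 1) / 2 ^ n, |x - y| ^ (1 - 2 * s) := by
  set c := cellToward k l
  have hd : (0 : ℝ) < 2 ^ n := by positivity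
  have hcell : (c : ℝ) / 2 ^ n ≤ (c + 1) / 2 ^ n := by gcongr; linarith
  have hlen : (c + 1 : ℝ) / 2 ^ n - c / 2 ^ n = (1 / 2) ^ n := by
    rw [← sub_div, add_sub_cancel_left, one_div_pow]
  calc dyadicTerm s x n l ≤ (1 / 2) ^ n * |x - l / 2 ^ n| ^ (1 - 2 * s) := by
        rw [dyadicTerm, mul_comm]
        exact mul_le_mul_of_nonneg_right (dyadicMu_le n l) (Real.rpow_nonneg (abs_nonneg _) _)
    _ = ∫ _ in (c : ℝ) / 2 ^ n..(c + 1) / 2 ^ n, |x - l / 2 ^ n| ^ (1 - 2 * s) := by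
        rw [intervalIntegral.integral_const, smul_eq_mul, hlen]
    _ ≤ ∫ y in (c : ℝ) / 2 ^ n..(c + 1) / 2 ^ n, |x - y| ^ (1 - 2 * s) := by
        refine intervalIntegral.integral_mono_on_of_le_Ioo hcell intervalIntegrable_const
          (intervalIntegrable_abs_sub_rpow (by linarith) x _ _) fun y hy => ?_
        rw [hx]
        exact rpow_abs_sub_le_of_mem_cellToward hlk hd (by linarith) hy

theorem S5_le_integral {s : ℝ} (hs : 1 / 2 ≤ s) (hs1 : s < 1) {x : ℝ} {n k : ℕ}
    (hk : k ≤ 2 ^ n) (hx : x = k / 2 ^ n) :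
    S5 s x n ≤ ∫ y in (0 : ℝ)..1, |x - y| ^ (1 - 2 * s) := by
  set f : ℝ → ℝ := fun y => |x - y| ^ (1 - 2 * s)
  set cellIntegral : ℕ → ℝ := fun c => ∫ y in (c : ℝ) / 2 ^ n..((c + 1 : ℕ) : ℝ) / 2 ^ n, f y
  have hcells : ∑ c ∈ Finset.range (2 ^ n), cellIntegral c = ∫ y in (0 : ℝ)..1, f y := by
    rw [intervalIntegral.sum_integral_adjacent_intervals fun c _ =>
      intervalIntegrable_abs_sub_rpow (by linarith) x _ _]
    simp [f]
  rw [S5_eq_sum_erase s x hx, ← hcells]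
  calc ∑ l ∈ (Finset.range (2 ^ n + 1)).erase k, dyadicTerm s x n l
      ≤ ∑ l ∈ (Finset.range (2 ^ n + 1)).erase k, cellIntegral (cellToward k l) :=
        Finset.sum_le_sum fun l hl => by
          simpa [cellIntegral, f] using
            dyadicTerm_le_integral_cellToward hs hs1 hx (Finset.ne_of_mem_erase hl)
    _ ≤ ∑ c ∈ Finset.range (2 ^ n), cellIntegral c := by
        refine Finset.sum_comp_le_sum_of_injOn (fun a ha b hb hab => cellToward_injOn k
          (Finset.ne_of_mem_erase ha) (Finset.ne_of_mem_erase hb) hab) (fun l hl => ?_)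
          fun c _ => intervalIntegral.integral_nonneg (by gcongr; simp)
            fun y _ => Real.rpow_nonneg (abs_nonneg _) _
        simp only [Finset.mem_erase, Finset.mem_range] at hl ⊢
        exact cellToward_lt hk (by omega) hl.1

theorem mul_two_pow_sub_le_two_pow {k N n : ℕ} (hk : k ≤ 2 ^ N) (hn : N ≤ n) :
    k * 2 ^ (n - N) ≤ 2 ^ n := by
  calc k * 2 ^ (n - N) ≤ 2 ^ N * 2 ^ (n - N) := Nat.mul_le_mul_right _ hk
    _ = 2 ^ n := by rw [← pow_add, Nat.add_sub_cancel' hn]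

theorem cast_div_two_pow_eq_mul_two_pow_sub (k : ℕ) {N n : ℕ} (hn : N ≤ n) :
    (k : ℝ) / 2 ^ N = ((k * 2 ^ (n - N) : ℕ) : ℝ) / 2 ^ n := by
  rw [← Nat.add_sub_cancel' hn, pow_add, Nat.add_sub_cancel_left]
  push_cast
  rw [mul_div_mul_right _ _ (by positivity)]

theorem stmt5_general (s : ℝ) (hs : 1 / 2 < s) (hs1 : s < 1)
    (N k0 : ℕ) (hk0' : k0 < 2 ^ N) :
    (∀ n m : ℕ, N ≤ n → n ≤ m →
      S5 s ((k0 : ℝ) / 2 ^ N) n ≤ S5 s ((k0 : ℝ) / 2 ^ N) m) ∧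
    (∀ n : ℕ, N ≤ n →
      S5 s ((k0 : ℝ) / 2 ^ N) n
        ≤ ∫ y in (0 : ℝ)..1, |(k0 : ℝ) / 2 ^ N - y| ^ (1 - 2 * s)) := by
  have hk : ∀ n, N ≤ n → k0 * 2 ^ (n - N) ≤ 2 ^ n :=
    fun n hn => mul_two_pow_sub_le_two_pow hk0'.le hn
  have hx : ∀ n, N ≤ n → (k0 : ℝ) / 2 ^ N = ((k0 * 2 ^ (n - N) : ℕ) : ℝ) / 2 ^ n :=
    fun n hn => cast_div_two_pow_eq_mul_two_pow_sub k0 hn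
  have hmono : MonotoneOn (S5 s ((k0 : ℝ) / 2 ^ N)) (Set.Ici N) :=
    monotoneOn_nat_Ici_of_le_succ fun n hn => S5_le_S5_succ hs.le (hk n hn) (hx n hn)
  exact ⟨fun n m hn hnm => hmono hn (hn.trans hnm) hnm,
    fun n hn => S5_le_integral hs.le hs1 (hk n hn) (hx n hn)⟩

theorem stmt5 (s : ℝ) (hs : 1 / 2 < s) (hs1 : s < 1)
    (N k0 : ℕ) (hk0 : 0 < k0) (hk0' : k0 < 2 ^ N) :
    (∀ n m : ℕ, N ≤ n → n ≤ m →
      S5 s ((k0 : ℝ) / 2 ^ N) n ≤ S5 s ((k0 : ℝ) / 2 ^ N) m) ∧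
    (∀ n : ℕ, N ≤ n →
      S5 s ((k0 : ℝ) / 2 ^ N) n
        ≤ ∫ y in (0 : ℝ)..1, |(k0 : ℝ) / 2 ^ N - y| ^ (1 - 2 * s)) :=
  stmt5_general s hs hs1 N k0 hk0'
end

section
/- Fix s ∈ (0,1), Λ > 0, n ∈ ℕ, and x ∈ V_{2-}^(n) = {k/2^{n+1} : 0 ≤ k ≤ 2^n-1}. Suppose j^(n)(x,y) ≤ Λ (y-x)^{-(1+2s)} for y ∈ V_{2+}^(n) = {1 - ℓ/2^{n+1} : 0 ≤ ℓ ≤ 2^n-1}. Then the double sum ∑_{x ∈ V_{2-}^(n)} ∑_{y ∈ V_{2+}^(n)} j^(n)(x,y)(y-x) · 2^{-(n+1)} · 2^{-(n+1)} is bounded by a constant depending only on s and Λ, uniformly in n. -/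
/-! With `N = 2 ^ (n + 1)`, the gap between `x = k / N` and `y = 1 - l / N` is `p + q`, where
`p = 1/2 - x` and `q = y - 1/2` are the distances to the midpoint. Since `p q ≤ (p + q) ^ 2`, the
bound on the kernel gives `j (x, y) (y - x) ≤ Λ (p + q) ^ (-2s) ≤ Λ p ^ (-s) q ^ (-s)`, so the double
sum factors into the square of a Riemann sum of `p ↦ p ^ (-s)` over `(0, 1/2]`. Concavity of
`p ↦ p ^ (1 - s)` bounds that sum by the integral `∫₀^{1/2} p ^ (-s) dp ≤ 1 / (1 - s)`. -/

open Finset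

namespace Real

-- The tangent line of the concave function `x ↦ x ^ (1 - s)` at `u` lies above its graph.
theorem one_sub_mul_rpow_neg_mul_sub_le {s t u : ℝ} (hs0 : 0 ≤ s) (hs1 : s ≤ 1)
    (ht : 0 ≤ t) (hu : 0 < u) :
    (1 - s) * u ^ (-s) * (u - t) ≤ u ^ (1 - s) - t ^ (1 - s) := by
  have hbern : (t / u) ^ (1 - s) ≤ 1 + (1 - s) * (t / u - 1) := by
    simpa using rpow_one_add_le_one_add_mul_self (s := t / u - 1)
      (by linarith [div_nonneg ht hu.le]) (by linarith) (by linarith)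
  have hsplit : u ^ (1 - s) = u ^ (-s) * u := by
    rw [sub_eq_neg_add, rpow_add hu, rpow_one]
  rw [div_rpow ht hu.le, div_le_iff₀ (rpow_pos_of_pos hu _), hsplit] at hbern
  have hexpand : u ^ (-s) * u * (1 + (1 - s) * (t / u - 1))
      = u ^ (-s) * u - (1 - s) * u ^ (-s) * (u - t) := by
    field_simp; ring
  rw [hsplit]; linarith

theorem sum_range_rpow_neg_le {s N : ℝ} (hs0 : 0 ≤ s) (hs1 : s < 1) (hN : 0 < N) (K : ℕ) :
    ∑ k ∈ range K, (((K : ℝ) - k) / N) ^ (-s) / N ≤ ((K : ℝ) / N) ^ (1 - s) / (1 - s) := by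
  have h1s : 0 < 1 - s := by linarith
  rw [le_div_iff₀ h1s, sum_mul]
  have htel := sum_range_sub' (fun k : ℕ => (((K : ℝ) - k) / N) ^ (1 - s)) K
  simp only [sub_self, zero_div, zero_rpow h1s.ne', sub_zero, Nat.cast_zero] at htel
  rw [← htel]
  refine sum_le_sum fun k hk => ?_
  have hk : (k : ℝ) + 1 ≤ K := by exact_mod_cast mem_range.mp hk
  have h := one_sub_mul_rpow_neg_mul_sub_le hs0 hs1.le
    (t := ((K : ℝ) - (k + 1 : ℕ)) / N) (u := ((K : ℝ) - k) / N)
    (by push_cast; exact div_nonneg (by linarith) hN.le)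
    (div_pos (by linarith) hN)
  refine Eq.trans_le ?_ h
  push_cast
  field_simp
  ring

theorem add_rpow_neg_two_mul_le {p q s : ℝ} (hp : 0 < p) (hq : 0 < q) (hs : 0 ≤ s) :
    (p + q) ^ (-(2 * s)) ≤ p ^ (-s) * q ^ (-s) := by
  have hpq : p * q ≤ (p + q) ^ 2 := by nlinarith
  calc (p + q) ^ (-(2 * s)) = ((p + q) ^ 2) ^ (-s) := by
        rw [← rpow_natCast_mul (by positivity)]; push_cast; ring_nf
    _ ≤ (p * q) ^ (-s) := rpow_le_rpow_of_nonpos (by positivity) hpq (by linarith)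
    _ = p ^ (-s) * q ^ (-s) := mul_rpow hp.le hq.le

theorem mul_add_le_of_le_rpow {J Λ p q s : ℝ} (hΛ : 0 ≤ Λ) (hs : 0 ≤ s) (hp : 0 < p)
    (hq : 0 < q) (hJ : J ≤ Λ * (p + q) ^ (-(1 + 2 * s))) :
    J * (p + q) ≤ Λ * (p ^ (-s) * q ^ (-s)) := by
  have hpq : 0 < p + q := add_pos hp hq
  calc J * (p + q) ≤ Λ * (p + q) ^ (-(1 + 2 * s)) * (p + q) := by gcongr
    _ = Λ * (p + q) ^ (-(2 * s)) := by
        rw [mul_assoc, ← rpow_add_one hpq.ne']; ring_nf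
    _ ≤ Λ * (p ^ (-s) * q ^ (-s)) := by gcongr; exact add_rpow_neg_two_mul_le hp hq hs

theorem sum_sum_mul_gap_le {Λ s N : ℝ} (hΛ : 0 ≤ Λ) (hs0 : 0 ≤ s) (hs1 : s < 1) (hN : 0 < N)
    {K : ℕ} (J : ℕ → ℕ → ℝ)
    (hJ : ∀ k ∈ range K, ∀ l ∈ range K,
      J k l ≤ Λ * (((K : ℝ) - k) / N + ((K : ℝ) - l) / N) ^ (-(1 + 2 * s))) :
    ∑ k ∈ range K, ∑ l ∈ range K, J k l * (((K : ℝ) - k) / N + ((K : ℝ) - l) / N) * N⁻¹ * N⁻¹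
      ≤ Λ * (((K : ℝ) / N) ^ (1 - s) / (1 - s)) ^ 2 := by
  let g (k : ℕ) : ℝ := (((K : ℝ) - k) / N) ^ (-s) / N
  have hpos (i : ℕ) (hi : i ∈ range K) : 0 < ((K : ℝ) - i) / N :=
    div_pos (sub_pos.mpr (by exact_mod_cast mem_range.mp hi)) hN
  have hterm : ∀ k ∈ range K, ∀ l ∈ range K,
      J k l * (((K : ℝ) - k) / N + ((K : ℝ) - l) / N) * N⁻¹ * N⁻¹ ≤ Λ * (g k * g l) := by
    intro k hk l hl
    calc _ ≤ Λ * ((((K : ℝ) - k) / N) ^ (-s) * (((K : ℝ) - l) / N) ^ (-s)) * N⁻¹ * N⁻¹ := by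
          gcongr ?_ * _ * _
          exact mul_add_le_of_le_rpow hΛ hs0 (hpos k hk) (hpos l hl) (hJ k hk l hl)
      _ = Λ * (g k * g l) := by simp only [g]; ring
  calc _ ≤ ∑ k ∈ range K, ∑ l ∈ range K, Λ * (g k * g l) :=
        sum_le_sum fun k hk => sum_le_sum fun l hl => hterm k hk l hl
    _ = Λ * (∑ k ∈ range K, g k) ^ 2 := by rw [sq, sum_mul_sum, mul_sum]; simp only [mul_sum]
    _ ≤ Λ * (((K : ℝ) / N) ^ (1 - s) / (1 - s)) ^ 2 := by
        gcongr
        · exact sum_nonneg fun k hk => div_nonneg (rpow_nonneg (hpos k hk).le _) hN.le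
        · exact sum_range_rpow_neg_le hs0 hs1 hN K

end Real

theorem stmt8 (s Λ : ℝ) (hs : 0 < s) (hs1 : s < 1) (hΛ : 0 < Λ) :
    ∃ C : ℝ, ∀ j : ℕ → ℝ → ℝ → ℝ,
      (∀ n : ℕ, ∀ k ∈ Finset.range (2 ^ n), ∀ l ∈ Finset.range (2 ^ n),
        j n ((k : ℝ) / 2 ^ (n + 1)) (1 - (l : ℝ) / 2 ^ (n + 1))
          ≤ Λ * ((1 - (l : ℝ) / 2 ^ (n + 1)) - (k : ℝ) / 2 ^ (n + 1)) ^ (-(1 + 2 * s))) →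
      ∀ n : ℕ,
        ∑ k ∈ Finset.range (2 ^ n), ∑ l ∈ Finset.range (2 ^ n),
          j n ((k : ℝ) / 2 ^ (n + 1)) (1 - (l : ℝ) / 2 ^ (n + 1))
            * ((1 - (l : ℝ) / 2 ^ (n + 1)) - (k : ℝ) / 2 ^ (n + 1))
            * (1 / 2 : ℝ) ^ (n + 1) * (1 / 2 : ℝ) ^ (n + 1) ≤ C := by
  refine ⟨Λ / (1 - s) ^ 2, fun j hj n => ?_⟩
  have hN : (0 : ℝ) < 2 ^ (n + 1) := by positivity
  have hgap (k l : ℕ) : (1 - (l : ℝ) / 2 ^ (n + 1)) - k / 2 ^ (n + 1)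
      = (((2 ^ n : ℕ) : ℝ) - k) / 2 ^ (n + 1) + (((2 ^ n : ℕ) : ℝ) - l) / 2 ^ (n + 1) := by
    push_cast; field_simp; ring
  have hhalf : ((2 ^ n : ℕ) : ℝ) / 2 ^ (n + 1) ≤ 1 := by
    rw [div_le_one hN]; push_cast; gcongr <;> norm_num
  specialize hj n
  simp only [hgap, one_div, inv_pow] at hj ⊢
  refine (Real.sum_sum_mul_gap_le hΛ.le hs.le hs1 hN _ hj).trans ?_
  rw [div_pow, ← mul_div_assoc]
  refine div_le_div_of_nonneg_right (mul_le_of_le_one_right hΛ.le ?_) (by positivity)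
  exact pow_le_one₀ (by positivity) (Real.rpow_le_one (by positivity) hhalf (by linarith))
end

section
/- Let s ∈ (0, 1/2) and λ > 0, and suppose j^(n)(x,y) ≥ λ|x-y|^{-(1+2s)} for all distinct x,y ∈ V^(n). Then there exists a constant c > 0 depending only on s such that for every function u on V^(n), the discrete energy E^(n)(u) = ∑_{x,y ∈ V^(n)} (u(x)-u(y))^2 j^(n)(x,y)μ^(n)(x)μ^(n)(y) satisfies E^(n)(u) ≥ c λ [Ext^(n) u]_{H^s([0,1])}^2, where Ext^(n) u is the piecewise constant extension of u with respect to the dyadic partition {U^(n)(x̄)}. -/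
noncomputable def discreteEnergy (j : ℕ → ℝ → ℝ → ℝ) (u : ℝ → ℝ) (n : ℕ) : ℝ :=
  ∑ k ∈ Finset.range (2 ^ n + 1), ∑ l ∈ Finset.range (2 ^ n + 1),
    (u ((k : ℝ) / 2 ^ n) - u ((l : ℝ) / 2 ^ n)) ^ 2
      * j n ((k : ℝ) / 2 ^ n) ((l : ℝ) / 2 ^ n) * dyadicMu n k * dyadicMu n l

/-- Piecewise constant extension of `u` with respect to the dyadic partition
`{U^(n)(x̄)}`: `Ext^(n) u (x) = u(x̄)` where `x̄` is the dyadic node nearest `x`. -/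
noncomputable def extOp (n : ℕ) (u : ℝ → ℝ) (x : ℝ) : ℝ :=
  u ((round (x * 2 ^ n) : ℝ) / 2 ^ n)

/-!
On the cell of `[0, 1)` nearest to the node `k / 2^n` the extension `Ext^(n) u` equals
`u (k / 2^n)`, so the Gagliardo double integral is a sum over pairs of cells of `(u_k - u_l)^2`
times the kernel integrated over the pair. For cells that are not neighbours, `|x - y|` is at least
half the distance of their nodes, so that integral is at most `4 |x_k - x_l|^(-(1+2s)) μ_k μ_l`.
For neighbours, integrating the kernel over one cell leaves
`(distance to the common endpoint)^(-2s) / (2s)`, whose integral over the other cell is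
`μ_k^(1-2s) / (2s(1-2s))`, again comparable to `|x_k - x_l|^(-(1+2s)) μ_k μ_l` since all cells
have length between `2^(-n-1)` and `2^(-n)`. The hypothesis on `j` then gives the claim with
`c = s(1-2s)/4`. No integrability of the double integrand is needed: the inner integral is
dominated, cell by cell, by an integrable function.
-/

open MeasureTheory Set Real

namespace DyadicEnergy

variable {s : ℝ}

theorem setIntegral_Ico_eq_intervalIntegral {f : ℝ → ℝ} {a b : ℝ} (hab : a ≤ b) :
    ∫ x in Ico a b, f x = ∫ x in a..b, f x := by
  rw [intervalIntegral.integral_of_le hab, integral_Ico_eq_integral_Ioo,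
    integral_Ioc_eq_integral_Ioo]

theorem intervalIntegral_rpow_le (hs : 0 < s) {c d : ℝ} (hc : 0 < c) (hcd : c ≤ d) :
    ∫ t in c..d, t ^ (-(1 + 2 * s)) ≤ c ^ (-(2 * s)) / (2 * s) := by
  rw [integral_rpow (Or.inr ⟨by linarith, notMem_uIcc_of_lt hc (hc.trans_le hcd)⟩),
    show -(1 + 2 * s) + 1 = -(2 * s) by ring, div_neg, ← neg_div, neg_sub]
  have : 0 ≤ d ^ (-(2 * s)) := rpow_nonneg (hc.le.trans hcd) _
  exact div_le_div_of_nonneg_right (by linarith) (by linarith)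

theorem setIntegral_Ico_abs_sub_rpow_le_of_lt (hs : 0 < s) {x A B : ℝ} (hxA : x < A)
    (hAB : A ≤ B) :
    ∫ y in Ico A B, |x - y| ^ (-(1 + 2 * s)) ≤ (A - x) ^ (-(2 * s)) / (2 * s) := by
  calc ∫ y in Ico A B, |x - y| ^ (-(1 + 2 * s))
      = ∫ y in Ico A B, (y - x) ^ (-(1 + 2 * s)) :=
        setIntegral_congr_fun measurableSet_Ico fun y hy => by
          rw [abs_sub_comm, abs_of_pos (by linarith [hy.1])]
    _ = ∫ t in A - x..B - x, t ^ (-(1 + 2 * s)) := by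
        rw [setIntegral_Ico_eq_intervalIntegral hAB,
          intervalIntegral.integral_comp_sub_right (fun t => t ^ (-(1 + 2 * s)))]
    _ ≤ _ := intervalIntegral_rpow_le hs (by linarith) (by linarith)

theorem setIntegral_Ico_abs_sub_rpow_le_of_gt (hs : 0 < s) {x A B : ℝ} (hBx : B < x)
    (hAB : A ≤ B) :
    ∫ y in Ico A B, |x - y| ^ (-(1 + 2 * s)) ≤ (x - B) ^ (-(2 * s)) / (2 * s) := by
  calc ∫ y in Ico A B, |x - y| ^ (-(1 + 2 * s))
      = ∫ y in Ico A B, (x - y) ^ (-(1 + 2 * s)) :=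
        setIntegral_congr_fun measurableSet_Ico fun y hy => by
          rw [abs_of_pos (by linarith [hy.2])]
    _ = ∫ t in x - B..x - A, t ^ (-(1 + 2 * s)) := by
        rw [setIntegral_Ico_eq_intervalIntegral hAB,
          intervalIntegral.integral_comp_sub_left (fun t => t ^ (-(1 + 2 * s)))]
    _ ≤ _ := intervalIntegral_rpow_le hs (by linarith) (by linarith)

theorem intervalIntegrable_sub_rpow {r a b : ℝ} (hr : -1 < r) :
    IntervalIntegrable (fun x => (x - a) ^ r) volume a b := by
  simpa using (intervalIntegral.intervalIntegrable_rpow' (a := 0) (b := b - a) hr).comp_sub_right a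

theorem intervalIntegrable_rpow_sub {r a b : ℝ} (hr : -1 < r) :
    IntervalIntegrable (fun x => (b - x) ^ r) volume a b := by
  simpa using (intervalIntegral.intervalIntegrable_rpow' (a := b - a) (b := 0) hr).comp_sub_left b

noncomputable def nearBound (s a b x : ℝ) : ℝ :=
  ((x - a) ^ (-(2 * s)) + (b - x) ^ (-(2 * s))) / (2 * s)

theorem setIntegral_Ico_abs_sub_rpow_le_nearBound (hs : 0 < s) {a b x A B : ℝ}
    (hx : x ∈ Ioo a b) (hAB : A ≤ B) (hsep : B ≤ a ∨ b ≤ A) :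
    ∫ y in Ico A B, |x - y| ^ (-(1 + 2 * s)) ≤ nearBound s a b x := by
  have hxa : 0 ≤ (x - a) ^ (-(2 * s)) := rpow_nonneg (by linarith [hx.1]) _
  have hbx : 0 ≤ (b - x) ^ (-(2 * s)) := rpow_nonneg (by linarith [hx.2]) _
  rw [nearBound, add_div]
  rcases hsep with hBa | hbA
  · calc _ ≤ (x - B) ^ (-(2 * s)) / (2 * s) :=
          setIntegral_Ico_abs_sub_rpow_le_of_gt hs (hBa.trans_lt hx.1) hAB
      _ ≤ (x - a) ^ (-(2 * s)) / (2 * s) := by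
          refine div_le_div_of_nonneg_right ?_ (by positivity)
          exact rpow_le_rpow_of_nonpos (by linarith [hx.1]) (by linarith) (by linarith)
      _ ≤ _ := le_add_of_nonneg_right (by positivity)
  · calc _ ≤ (A - x) ^ (-(2 * s)) / (2 * s) :=
          setIntegral_Ico_abs_sub_rpow_le_of_lt hs (hx.2.trans_le hbA) hAB
      _ ≤ (b - x) ^ (-(2 * s)) / (2 * s) := by
          refine div_le_div_of_nonneg_right ?_ (by positivity)
          exact rpow_le_rpow_of_nonpos (by linarith [hx.2]) (by linarith) (by linarith)
      _ ≤ _ := le_add_of_nonneg_left (by positivity)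

theorem integrableOn_nearBound (hs2 : s < 1 / 2) {a b : ℝ} (hab : a ≤ b) :
    IntegrableOn (nearBound s a b) (Ico a b) := by
  rw [← intervalIntegrable_iff_integrableOn_Ico_of_le hab]
  have hr : -1 < -(2 * s) := by linarith
  exact ((intervalIntegrable_sub_rpow hr).add (intervalIntegrable_rpow_sub hr)).div_const _

theorem integral_nearBound (hs : 0 < s) (hs2 : s < 1 / 2) {a b : ℝ} (hab : a ≤ b) :
    ∫ x in Ico a b, nearBound s a b x = (b - a) ^ (1 - 2 * s) / (s * (1 - 2 * s)) := by
  have hpow : ∫ t in (0 : ℝ)..b - a, t ^ (-(2 * s)) = (b - a) ^ (1 - 2 * s) / (1 - 2 * s) := by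
    rw [integral_rpow (Or.inl (by linarith)), show -(2 * s) + 1 = 1 - 2 * s by ring,
      zero_rpow (by linarith), sub_zero]
  have hleft : ∫ x in a..b, (x - a) ^ (-(2 * s)) = ∫ t in (0 : ℝ)..b - a, t ^ (-(2 * s)) := by
    rw [intervalIntegral.integral_comp_sub_right (fun t => t ^ (-(2 * s))), sub_self]
  have hright : ∫ x in a..b, (b - x) ^ (-(2 * s)) = ∫ t in (0 : ℝ)..b - a, t ^ (-(2 * s)) := by
    rw [intervalIntegral.integral_comp_sub_left (fun t => t ^ (-(2 * s))), sub_self]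
  have hr : -1 < -(2 * s) := by linarith
  simp only [nearBound]
  rw [setIntegral_Ico_eq_intervalIntegral hab, intervalIntegral.integral_div,
    intervalIntegral.integral_add (intervalIntegrable_sub_rpow hr) (intervalIntegrable_rpow_sub hr),
    hleft, hright, hpow]
  have : 1 - 2 * s ≠ 0 := by linarith
  field_simp
  ring

theorem integrableOn_abs_sub_rpow {S : Set ℝ} {x d r : ℝ} (hSm : MeasurableSet S)
    (hS : volume S ≠ ⊤) (hd : 0 < d) (hr : r ≤ 0) (h : ∀ y ∈ S, d ≤ |x - y|) :
    IntegrableOn (fun y => |x - y| ^ r) S := by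
  refine Measure.integrableOn_of_bounded hS
    ((measurable_const.sub measurable_id).abs.pow_const r).aestronglyMeasurable (M := d ^ r)
    (ae_restrict_of_forall_mem hSm fun y hy => ?_)
  rw [norm_of_nonneg (by positivity)]
  exact rpow_le_rpow_of_nonpos hd (h y hy) hr

theorem setIntegral_abs_sub_rpow_le {S : Set ℝ} {x d r : ℝ} (hS : volume S ≠ ⊤) (hd : 0 < d)
    (hr : r ≤ 0) (h : ∀ y ∈ S, d ≤ |x - y|) :
    ∫ y in S, |x - y| ^ r ≤ d ^ r * volume.real S := by
  refine (le_abs_self _).trans <| norm_setIntegral_le_of_norm_le_const (f := fun y => |x - y| ^ r)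
    hS.lt_top fun y hy => ?_
  rw [norm_of_nonneg (by positivity)]
  exact rpow_le_rpow_of_nonpos hd (h y hy) hr

theorem dyadicMu_mem_Icc (n k : ℕ) : dyadicMu n k ∈ Icc (((2 : ℝ) ^ n)⁻¹ / 2) ((2 : ℝ) ^ n)⁻¹ := by
  have hpow : ((1 : ℝ) / 2) ^ n = ((2 : ℝ) ^ n)⁻¹ := by rw [one_div, inv_pow]
  have : (0 : ℝ) < ((2 : ℝ) ^ n)⁻¹ := by positivity
  unfold dyadicMu
  split_ifs
  · rw [pow_succ, hpow]; constructor <;> linarith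
  · rw [hpow]; constructor <;> linarith

theorem dyadicMu_pos (n k : ℕ) : 0 < dyadicMu n k :=
  lt_of_lt_of_le (by positivity) (dyadicMu_mem_Icc n k).1

theorem abs_node_sub_node (n k l : ℕ) :
    |(k : ℝ) / 2 ^ n - l / 2 ^ n| = |(k : ℝ) - l| * ((2 : ℝ) ^ n)⁻¹ := by
  rw [← sub_div, abs_div, abs_of_pos (by positivity : (0 : ℝ) < 2 ^ n), div_eq_mul_inv]

noncomputable def cellEnd (n k : ℕ) : ℝ := max 0 (min 1 (((k : ℝ) - 1 / 2) / 2 ^ n))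

theorem cellEnd_mono (n : ℕ) : Monotone (cellEnd n) := fun k l hkl => by
  unfold cellEnd
  gcongr

theorem cellEnd_zero (n : ℕ) : cellEnd n 0 = 0 :=
  max_eq_left (min_le_of_right_le (div_nonpos_of_nonpos_of_nonneg (by norm_num) (by positivity)))

theorem cellEnd_of_le {n k : ℕ} (hk0 : 1 ≤ k) (hk : k ≤ 2 ^ n) :
    cellEnd n k = ((k : ℝ) - 1 / 2) / 2 ^ n := by
  have h2n : (0 : ℝ) < 2 ^ n := by positivity
  have hk0' : (1 : ℝ) ≤ k := by exact_mod_cast hk0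
  have hk' : (k : ℝ) ≤ 2 ^ n := by exact_mod_cast hk
  rw [cellEnd, min_eq_right ((div_le_one h2n).2 (by linarith)),
    max_eq_right (div_nonneg (by linarith) h2n.le)]

theorem cellEnd_two_pow_add_one (n : ℕ) : cellEnd n (2 ^ n + 1) = 1 := by
  have h2n : (0 : ℝ) < 2 ^ n := by positivity
  rw [cellEnd, min_eq_left ((one_le_div h2n).2 (by push_cast; linarith)), max_eq_right zero_le_one]

theorem cellEnd_succ_sub_cellEnd {n k : ℕ} (hk : k ≤ 2 ^ n) :
    cellEnd n (k + 1) - cellEnd n k = dyadicMu n k := by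
  have h2n : (0 : ℝ) < 2 ^ n := by positivity
  have hpow : ((1 : ℝ) / 2) ^ n = 1 / 2 ^ n := by rw [div_pow, one_pow]
  rcases Nat.eq_zero_or_pos k with rfl | hk0
  · rw [dyadicMu, if_pos (Or.inl rfl), cellEnd_zero, zero_add,
      cellEnd_of_le le_rfl Nat.one_le_two_pow, pow_succ, hpow]
    push_cast
    ring
  rcases hk.eq_or_lt with rfl | hkn
  · rw [dyadicMu, if_pos (Or.inr rfl), cellEnd_two_pow_add_one,
      cellEnd_of_le Nat.one_le_two_pow le_rfl, pow_succ, hpow]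
    push_cast
    field_simp
    ring
  · rw [dyadicMu, if_neg (by omega), cellEnd_of_le (by omega) hkn, cellEnd_of_le hk0 hk, hpow]
    push_cast
    ring

/-- The paper's cell `U^(n)(k / 2^n)` with the point `1` removed: the points of `[0, 1)` whose
nearest node of level `n` is `k / 2^n` (see `mem_cell_iff`). -/
def cell (n k : ℕ) : Set ℝ := Ico (cellEnd n k) (cellEnd n (k + 1))

theorem measurableSet_cell (n k : ℕ) : MeasurableSet (cell n k) := measurableSet_Ico

theorem mem_cell_iff {n k : ℕ} {x : ℝ} :
    x ∈ cell n k ↔ x ∈ Ico (0 : ℝ) 1 ∧ round (x * 2 ^ n) = k := by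
  have h2n : (0 : ℝ) < 2 ^ n := by positivity
  simp only [cell, cellEnd, mem_Ico, max_le_iff, min_le_iff, lt_max_iff, lt_min_iff,
    round_eq_iff, Int.cast_natCast, div_le_iff₀ h2n, lt_div_iff₀ h2n, Nat.cast_succ]
  constructor
  · rintro ⟨⟨h0, h1 | h1⟩, h2 | ⟨h2, h3⟩⟩ <;>
      first | exact ⟨⟨h0, h2⟩, h1, by linarith⟩ | linarith
  · rintro ⟨⟨h0, h1⟩, h2, h3⟩
    exact ⟨⟨h0, Or.inr h2⟩, Or.inr ⟨h1, by linarith⟩⟩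

theorem cell_subset_Icc (n k : ℕ) : cell n k ⊆ Icc 0 1 :=
  fun _ hx => Ico_subset_Icc_self (mem_cell_iff.1 hx).1

theorem eq_of_mem_cell {n k l : ℕ} {x : ℝ} (hk : x ∈ cell n k) (hl : x ∈ cell n l) : k = l := by
  exact_mod_cast (mem_cell_iff.1 hk).2.symm.trans (mem_cell_iff.1 hl).2

theorem extOp_eq_of_mem_cell {n k : ℕ} {x : ℝ} (u : ℝ → ℝ) (hx : x ∈ cell n k) :
    extOp n u x = u (k / 2 ^ n) := by
  rw [extOp, (mem_cell_iff.1 hx).2, Int.cast_natCast]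

theorem exists_mem_cell (n : ℕ) {x : ℝ} (hx : x ∈ Ico (0 : ℝ) 1) : ∃ k ≤ 2 ^ n, x ∈ cell n k := by
  have h2n : (0 : ℝ) < 2 ^ n := by positivity
  obtain ⟨hlo, hhi⟩ := round_eq_iff.1 (rfl : round (x * 2 ^ n) = _)
  have hr : (-1 : ℤ) < round (x * 2 ^ n) := by
    have := mul_nonneg hx.1 h2n.le
    exact_mod_cast (by linarith : (-1 : ℝ) < round (x * 2 ^ n))
  obtain ⟨k, hk⟩ := Int.eq_ofNat_of_zero_le (by omega : 0 ≤ round (x * 2 ^ n))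
  refine ⟨k, ?_, mem_cell_iff.2 ⟨hx, hk⟩⟩
  rw [hk, Int.cast_natCast] at hlo
  have : (k : ℝ) < 2 ^ n + 1 := by nlinarith [hx.2]
  exact Nat.lt_succ_iff.1 (by exact_mod_cast this)

theorem abs_sub_node_le {n k : ℕ} {x : ℝ} (hx : x ∈ cell n k) :
    |x - k / 2 ^ n| ≤ ((2 : ℝ) ^ n)⁻¹ / 2 := by
  have h2n : (0 : ℝ) < 2 ^ n := by positivity
  have h := abs_sub_round (x * 2 ^ n)
  rw [(mem_cell_iff.1 hx).2, Int.cast_natCast] at h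
  calc |x - k / 2 ^ n| = |x * 2 ^ n - k| * ((2 : ℝ) ^ n)⁻¹ := by
        rw [← abs_of_pos (inv_pos.2 h2n), ← abs_mul]
        congr 1
        field_simp
    _ ≤ 1 / 2 * ((2 : ℝ) ^ n)⁻¹ := by gcongr
    _ = _ := by ring

theorem abs_node_sub_node_div_two_le {n k l : ℕ} {x y : ℝ} (hx : x ∈ cell n k)
    (hy : y ∈ cell n l) (hkl : k + 2 ≤ l ∨ l + 2 ≤ k) :
    |(k : ℝ) / 2 ^ n - l / 2 ^ n| / 2 ≤ |x - y| := by
  have hkl' : (2 : ℝ) ≤ |(k : ℝ) - l| := by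
    rw [le_abs]
    rcases hkl with h | h
    · have : (k : ℝ) + 2 ≤ l := by exact_mod_cast h
      right
      linarith
    · have : (l : ℝ) + 2 ≤ k := by exact_mod_cast h
      left
      linarith
  have hsep : 2 * ((2 : ℝ) ^ n)⁻¹ ≤ |(k : ℝ) / 2 ^ n - l / 2 ^ n| := by
    rw [abs_node_sub_node]; gcongr
  have htri : |(k : ℝ) / 2 ^ n - l / 2 ^ n| ≤ |x - k / 2 ^ n| + |x - y| + |y - l / 2 ^ n| := by
    have h1 := abs_sub_le ((k : ℝ) / 2 ^ n) x (l / 2 ^ n)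
    have h2 := abs_sub_le x y ((l : ℝ) / 2 ^ n)
    rw [abs_sub_comm _ x] at h1
    linarith
  linarith [abs_sub_node_le hx, abs_sub_node_le hy]

theorem measureReal_cell {n k : ℕ} (hk : k ≤ 2 ^ n) : volume.real (cell n k) = dyadicMu n k := by
  rw [cell, Real.volume_real_Ico_of_le (cellEnd_mono n k.le_succ), cellEnd_succ_sub_cellEnd hk]

theorem ae_mem_Ioo_cell (n : ℕ) :
    ∀ᵐ x ∂volume.restrict (Icc (0 : ℝ) 1),
      ∃ k ≤ 2 ^ n, x ∈ Ioo (cellEnd n k) (cellEnd n (k + 1)) := by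
  have hnull : volume (insert 1 (range (cellEnd n))) = 0 :=
    ((countable_range _).insert 1).measure_zero _
  filter_upwards [ae_restrict_mem measurableSet_Icc,
    ae_restrict_of_ae (measure_eq_zero_iff_ae_notMem.1 hnull)] with x hx hxn
  rw [mem_insert_iff, not_or] at hxn
  obtain ⟨k, hk, hxk⟩ := exists_mem_cell n ⟨hx.1, hx.2.lt_of_ne hxn.1⟩
  exact ⟨k, hk, hxk.1.lt_of_ne fun h => hxn.2 ⟨k, h⟩, hxk.2⟩

theorem setIntegral_Icc_le_sum_cell {n : ℕ} {f : ℝ → ℝ} {F : ℕ → ℝ → ℝ} (hf : ∀ x, 0 ≤ f x)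
    (hF : ∀ k ≤ 2 ^ n, IntegrableOn (F k) (cell n k))
    (hfF : ∀ k ≤ 2 ^ n, ∀ x ∈ Ioo (cellEnd n k) (cellEnd n (k + 1)), f x ≤ F k x) :
    ∫ x in Icc (0 : ℝ) 1, f x ≤ ∑ k ∈ Finset.range (2 ^ n + 1), ∫ x in cell n k, F k x := by
  have hG : ∀ k ∈ Finset.range (2 ^ n + 1),
      Integrable ((cell n k).indicator (F k)) (volume.restrict (Icc 0 1)) := fun k hk =>
    ((hF k (Finset.mem_range_succ_iff.1 hk)).integrable_indicator (measurableSet_cell n k)).restrict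
  have hfG : ∀ᵐ x ∂volume.restrict (Icc (0 : ℝ) 1),
      f x ≤ ∑ k ∈ Finset.range (2 ^ n + 1), (cell n k).indicator (F k) x := by
    filter_upwards [ae_mem_Ioo_cell n] with x ⟨k, hk, hx⟩
    have hxk : x ∈ cell n k := Ioo_subset_Ico_self hx
    rw [Finset.sum_eq_single k
      (fun j _ hjk => indicator_of_notMem (fun hxj => hjk (eq_of_mem_cell hxj hxk)) _)
      (fun h => (h (Finset.mem_range_succ_iff.2 hk)).elim), indicator_of_mem hxk]
    exact hfF k hk x hx
  refine (integral_mono_of_nonneg (ae_of_all _ hf) (integrable_finsetSum _ hG) hfG).trans_eq ?_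
  rw [integral_finsetSum _ hG]
  refine Finset.sum_congr rfl fun k _ => ?_
  rw [setIntegral_indicator (measurableSet_cell n k), inter_eq_right.2 (cell_subset_Icc n k)]

theorem cellEnd_succ_le_or_le {n k l : ℕ} (hkl : k ≠ l) :
    cellEnd n (l + 1) ≤ cellEnd n k ∨ cellEnd n (k + 1) ≤ cellEnd n l := by
  rcases Nat.lt_or_gt_of_ne hkl with h | h
  · exact Or.inr (cellEnd_mono n h)
  · exact Or.inl (cellEnd_mono n h)

theorem integrableOn_cell_abs_sub_rpow (hs : 0 < s) {n k l : ℕ} (hkl : k ≠ l) {x : ℝ}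
    (hx : x ∈ Ioo (cellEnd n k) (cellEnd n (k + 1))) :
    IntegrableOn (fun y => |x - y| ^ (-(1 + 2 * s))) (cell n l) := by
  refine integrableOn_abs_sub_rpow (measurableSet_cell n l) measure_Ico_lt_top.ne
    (lt_min (sub_pos.2 hx.1) (sub_pos.2 hx.2)) (by linarith) fun y hy => ?_
  rcases cellEnd_succ_le_or_le (n := n) hkl with h | h
  · exact (min_le_left _ _).trans (by linarith [hy.2, le_abs_self (x - y)])
  · exact (min_le_right _ _).trans (by linarith [hy.1, neg_abs_le (x - y)])

/-- Neighbouring cells touch, so for them the singularity of the kernel has to be integrated out;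
`nearBound` is integrable over a cell only because `s < 1 / 2`. -/
noncomputable def cellBound (s : ℝ) (n k l : ℕ) : ℝ → ℝ :=
  if k + 1 = l ∨ l + 1 = k then nearBound s (cellEnd n k) (cellEnd n (k + 1))
  else fun _ => dyadicMu n l * (|(k : ℝ) / 2 ^ n - l / 2 ^ n| / 2) ^ (-(1 + 2 * s))

theorem setIntegral_cell_abs_sub_rpow_le_cellBound (hs : 0 < s) {n k l : ℕ} (hkl : k ≠ l)
    (hl : l ≤ 2 ^ n) {x : ℝ} (hx : x ∈ Ioo (cellEnd n k) (cellEnd n (k + 1))) :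
    ∫ y in cell n l, |x - y| ^ (-(1 + 2 * s)) ≤ cellBound s n k l x := by
  unfold cellBound
  split_ifs with hadj
  · exact setIntegral_Ico_abs_sub_rpow_le_nearBound hs hx (cellEnd_mono n l.le_succ)
      (cellEnd_succ_le_or_le hkl)
  · have hD : 0 < |(k : ℝ) / 2 ^ n - l / 2 ^ n| / 2 := by
      rw [abs_node_sub_node]
      have : (k : ℝ) ≠ l := by exact_mod_cast hkl
      have := sub_ne_zero.2 this
      positivity
    calc _ ≤ (|(k : ℝ) / 2 ^ n - l / 2 ^ n| / 2) ^ (-(1 + 2 * s)) * volume.real (cell n l) :=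
          setIntegral_abs_sub_rpow_le measure_Ico_lt_top.ne hD (by linarith) fun y hy =>
            abs_node_sub_node_div_two_le (Ioo_subset_Ico_self hx) hy (by omega)
      _ = _ := by rw [measureReal_cell hl, mul_comm]

theorem integrableOn_cellBound (hs2 : s < 1 / 2) (n k l : ℕ) :
    IntegrableOn (cellBound s n k l) (cell n k) := by
  unfold cellBound
  split_ifs
  · exact integrableOn_nearBound hs2 (cellEnd_mono n k.le_succ)
  · exact integrableOn_const measure_Ico_lt_top.ne

noncomputable def kernelWeight (s : ℝ) (n k l : ℕ) : ℝ :=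
  |(k : ℝ) / 2 ^ n - l / 2 ^ n| ^ (-(1 + 2 * s)) * dyadicMu n k * dyadicMu n l

theorem dyadicMu_rpow_le_four_mul_kernelWeight (hs2 : s < 1 / 2) (n : ℕ) {k l : ℕ}
    (hadj : k + 1 = l ∨ l + 1 = k) :
    dyadicMu n k ^ (1 - 2 * s) ≤ 4 * kernelWeight s n k l := by
  set h : ℝ := ((2 : ℝ) ^ n)⁻¹
  have hh : 0 < h := by positivity
  have hD : |(k : ℝ) / 2 ^ n - l / 2 ^ n| = h := by
    rw [abs_node_sub_node, abs_sub_comm]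
    rcases hadj with rfl | rfl <;> simp [h]
  obtain ⟨hk1, hk2⟩ := dyadicMu_mem_Icc n k
  obtain ⟨hl1, -⟩ := dyadicMu_mem_Icc n l
  calc dyadicMu n k ^ (1 - 2 * s) ≤ h ^ (1 - 2 * s) :=
        rpow_le_rpow (dyadicMu_pos n k).le hk2 (by linarith)
    _ = 4 * (h ^ (-(1 + 2 * s)) * (h / 2) * (h / 2)) := by
        rw [show 1 - 2 * s = -(1 + 2 * s) + 2 by ring, rpow_add hh, rpow_two]
        ring
    _ ≤ 4 * kernelWeight s n k l := by
        have := dyadicMu_pos n k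
        rw [kernelWeight, hD]
        gcongr

theorem half_rpow_le_four_mul (hs2 : s < 1 / 2) {D : ℝ} (hD : 0 ≤ D) :
    (D / 2) ^ (-(1 + 2 * s)) ≤ 4 * D ^ (-(1 + 2 * s)) := by
  rw [div_rpow hD zero_le_two, rpow_neg zero_le_two, div_inv_eq_mul, mul_comm]
  gcongr
  calc (2 : ℝ) ^ (1 + 2 * s) ≤ 2 ^ (2 : ℝ) := rpow_le_rpow_of_exponent_le one_le_two (by linarith)
    _ = 4 := by norm_num

theorem setIntegral_cellBound_le (hs : 0 < s) (hs2 : s < 1 / 2) {n k : ℕ} (hk : k ≤ 2 ^ n)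
    (l : ℕ) :
    ∫ x in cell n k, cellBound s n k l x ≤ 4 / (s * (1 - 2 * s)) * kernelWeight s n k l := by
  have hC : 0 < s * (1 - 2 * s) := mul_pos hs (by linarith)
  unfold cellBound
  split_ifs with hadj
  · rw [cell, integral_nearBound hs hs2 (cellEnd_mono n k.le_succ), cellEnd_succ_sub_cellEnd hk,
      div_mul_eq_mul_div]
    exact div_le_div_of_nonneg_right (dyadicMu_rpow_le_four_mul_kernelWeight hs2 n hadj) hC.le
  · have hW : 0 ≤ kernelWeight s n k l := by
      have := dyadicMu_pos n k; have := dyadicMu_pos n l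
      unfold kernelWeight; positivity
    have h4 : 4 ≤ 4 / (s * (1 - 2 * s)) := by
      rw [le_div_iff₀ hC]; nlinarith
    rw [setIntegral_const, measureReal_cell hk, smul_eq_mul]
    calc _ ≤ dyadicMu n k *
          (dyadicMu n l * (4 * |(k : ℝ) / 2 ^ n - l / 2 ^ n| ^ (-(1 + 2 * s)))) := by
          have := dyadicMu_pos n k; have := dyadicMu_pos n l
          gcongr
          exact half_rpow_le_four_mul hs2 (abs_nonneg _)
      _ = 4 * kernelWeight s n k l := by rw [kernelWeight]; ring
      _ ≤ _ := by gcongr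

theorem setIntegral_extOp_sq_mul_le (hs : 0 < s) (u : ℝ → ℝ) {n k : ℕ} {x : ℝ}
    (hx : x ∈ Ioo (cellEnd n k) (cellEnd n (k + 1))) :
    ∫ y in Icc (0 : ℝ) 1, (extOp n u x - extOp n u y) ^ 2 * |x - y| ^ (-(1 + 2 * s))
      ≤ ∑ l ∈ Finset.range (2 ^ n + 1),
          (u (k / 2 ^ n) - u (l / 2 ^ n)) ^ 2 * cellBound s n k l x := by
  have hxk := extOp_eq_of_mem_cell u (Ioo_subset_Ico_self hx)
  calc _ ≤ ∑ l ∈ Finset.range (2 ^ n + 1),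
        ∫ y in cell n l, (u (k / 2 ^ n) - u (l / 2 ^ n)) ^ 2 * |x - y| ^ (-(1 + 2 * s)) := by
        refine setIntegral_Icc_le_sum_cell (fun y => by positivity) (fun l _ => ?_)
          (fun l _ y hy => ?_)
        · obtain rfl | hkl := eq_or_ne k l
          · simp
          · exact (integrableOn_cell_abs_sub_rpow hs hkl hx).const_mul _
        · rw [hxk, extOp_eq_of_mem_cell u (Ioo_subset_Ico_self hy)]
    _ ≤ _ := Finset.sum_le_sum fun l hl => by
        rw [integral_const_mul]
        obtain rfl | hkl := eq_or_ne k l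
        · simp
        · exact mul_le_mul_of_nonneg_left (setIntegral_cell_abs_sub_rpow_le_cellBound hs hkl
            (Finset.mem_range_succ_iff.1 hl) hx) (sq_nonneg _)

theorem integral_extOp_le (hs : 0 < s) (hs2 : s < 1 / 2) (n : ℕ) (u : ℝ → ℝ) :
    ∫ x in Icc (0 : ℝ) 1, ∫ y in Icc (0 : ℝ) 1,
        (extOp n u x - extOp n u y) ^ 2 * |x - y| ^ (-(1 + 2 * s))
      ≤ ∑ k ∈ Finset.range (2 ^ n + 1), ∑ l ∈ Finset.range (2 ^ n + 1),
          (u (k / 2 ^ n) - u (l / 2 ^ n)) ^ 2 * (4 / (s * (1 - 2 * s)) * kernelWeight s n k l) := by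
  have hint (k l : ℕ) : IntegrableOn
      (fun x => (u (k / 2 ^ n) - u (l / 2 ^ n)) ^ 2 * cellBound s n k l x) (cell n k) :=
    (integrableOn_cellBound hs2 n k l).const_mul _
  calc _ ≤ ∑ k ∈ Finset.range (2 ^ n + 1), ∫ x in cell n k,
        ∑ l ∈ Finset.range (2 ^ n + 1), (u (k / 2 ^ n) - u (l / 2 ^ n)) ^ 2 * cellBound s n k l x :=
        setIntegral_Icc_le_sum_cell (fun x => integral_nonneg fun y => by positivity)
          (fun k _ => integrable_finsetSum _ fun l _ => hint k l)
          (fun k _ x hx => setIntegral_extOp_sq_mul_le hs u hx)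
    _ ≤ _ := Finset.sum_le_sum fun k hk => by
        rw [integral_finsetSum _ fun l _ => hint k l]
        refine Finset.sum_le_sum fun l _ => ?_
        rw [integral_const_mul]
        exact mul_le_mul_of_nonneg_left
          (setIntegral_cellBound_le hs hs2 (Finset.mem_range_succ_iff.1 hk) l) (sq_nonneg _)

end DyadicEnergy

open DyadicEnergy

theorem stmt13 (s : ℝ) (hs : 0 < s) (hs2 : s < 1 / 2) :
    ∃ c : ℝ, 0 < c ∧ ∀ lam : ℝ, 0 < lam → ∀ (n : ℕ) (j : ℕ → ℝ → ℝ → ℝ),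
      (∀ k ∈ Finset.range (2 ^ n + 1), ∀ l ∈ Finset.range (2 ^ n + 1), k ≠ l →
        lam * |(k : ℝ) / 2 ^ n - (l : ℝ) / 2 ^ n| ^ (-(1 + 2 * s))
          ≤ j n ((k : ℝ) / 2 ^ n) ((l : ℝ) / 2 ^ n)) →
      ∀ u : ℝ → ℝ,
        c * lam * (∫ x in Set.Icc (0 : ℝ) 1, ∫ y in Set.Icc (0 : ℝ) 1,
            (extOp n u x - extOp n u y) ^ 2 * |x - y| ^ (-(1 + 2 * s)))
          ≤ discreteEnergy j u n := by
  have hC : 0 < s * (1 - 2 * s) := mul_pos hs (by linarith)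
  have hcancel : s * (1 - 2 * s) / 4 * (4 / (s * (1 - 2 * s))) = 1 := by
    rw [div_mul_div_comm, mul_comm, div_self (by positivity)]
  refine ⟨s * (1 - 2 * s) / 4, by positivity, fun lam hlam n j hj u => ?_⟩
  calc _ ≤ s * (1 - 2 * s) / 4 * lam * ∑ k ∈ Finset.range (2 ^ n + 1),
        ∑ l ∈ Finset.range (2 ^ n + 1),
          (u (k / 2 ^ n) - u (l / 2 ^ n)) ^ 2 * (4 / (s * (1 - 2 * s)) * kernelWeight s n k l) := by
        gcongr
        exact integral_extOp_le hs hs2 n u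
    _ = ∑ k ∈ Finset.range (2 ^ n + 1), ∑ l ∈ Finset.range (2 ^ n + 1),
          (u (k / 2 ^ n) - u (l / 2 ^ n)) ^ 2 * (lam * kernelWeight s n k l) := by
        simp_rw [Finset.mul_sum]
        refine Finset.sum_congr rfl fun k _ => Finset.sum_congr rfl fun l _ => ?_
        linear_combination
          (lam * (u (k / 2 ^ n) - u (l / 2 ^ n)) ^ 2 * kernelWeight s n k l) * hcancel
    _ ≤ discreteEnergy j u n := Finset.sum_le_sum fun k hk => Finset.sum_le_sum fun l hl => by
        obtain rfl | hkl := eq_or_ne k l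
        · simp
        have := dyadicMu_pos n k
        have := dyadicMu_pos n l
        rw [kernelWeight, ← mul_assoc, ← mul_assoc, ← mul_assoc, mul_assoc _ lam]
        gcongr
        exact hj k hk l hl hkl
end

section
/- Fix i_0 > 2 and suppose u is continuous on [0, 1/i_0] ∪ [1 - 1/i_0, 1]. Under the kernel bounds λ_i(y-x)^{-(1+2s)} ≤ j_i^(n)(x,y) ≤ Λ_i(y-x)^{-(1+2s)} with λ_i/i^2 → 1 and Λ_i/i^2 → 1, for fixed n one has lim_{i→∞} 2 ∑_{x ∈ V_{i-}^(n)} ∑_{y ∈ V_{i+}^(n)} (u(x)-u(y))^2 j_i^(n)(x,y) μ_i^(n)(x) μ_i^(n)(y) = 2(u(0) - u(1))^2. -/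
open Filter Topology Set Finset

/-!
For fixed `n` the double sum has `4 ^ n` terms, so it suffices to pass to the limit in each.
The node `k / (i 2ⁿ)` of `V_{i-}` tends to `0` from the right and the node `1 - l / (i 2ⁿ)`
of `V_{i+}` tends to `1` from the left, so one-sided continuity of `u` at `0` and `1` handles
`(u x - u y)²`. The distance between the nodes tends to `1`, so the kernel bounds squeeze
`j_i / i²` to `1`, while the two measure factors `1 / (i 2ⁿ)` contribute `1 / (i² 4ⁿ)`.
-/

theorem tendsto_div_natCast_mul_atTop_nhds_zero (c a : ℝ) :
    Tendsto (fun i : ℕ => c / (i * a)) atTop (𝓝 0) := by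
  simpa only [div_mul_eq_div_div, zero_div] using
    (tendsto_const_div_atTop_nhds_zero_nat c).div_const a

theorem tendsto_div_of_mul_le_of_le_mul {ι : Type*} {l : Filter ι}
    {lam Lam J w e : ι → ℝ} {c e₀ : ℝ} (hlam : Tendsto (fun i => lam i / w i) l (𝓝 c))
    (hLam : Tendsto (fun i => Lam i / w i) l (𝓝 c)) (he : Tendsto e l (𝓝 e₀))
    (hw : ∀ᶠ i in l, 0 < w i)
    (hJ : ∀ᶠ i in l, lam i * e i ≤ J i ∧ J i ≤ Lam i * e i) :
    Tendsto (fun i => J i / w i) l (𝓝 (c * e₀)) := by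
  refine tendsto_of_tendsto_of_tendsto_of_le_of_le' (hlam.mul he) (hLam.mul he) ?_ ?_
  · filter_upwards [hw, hJ] with i hwi hJi
    rw [div_mul_eq_mul_div]
    exact div_le_div_of_nonneg_right hJi.1 hwi.le
  · filter_upwards [hw, hJ] with i hwi hJi
    rw [div_mul_eq_mul_div]
    exact div_le_div_of_nonneg_right hJi.2 hwi.le

theorem tendsto_sq_sub_of_continuousOn_Icc_union {u : ℝ → ℝ} {δ : ℝ} (hδ : 0 < δ)
    (hu : ContinuousOn u (Icc 0 δ ∪ Icc (1 - δ) 1)) (k l : ℕ) {a : ℝ} (ha : 0 ≤ a) :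
    Tendsto (fun i : ℕ => (u (k / (i * a)) - u (1 - l / (i * a))) ^ 2) atTop
      (𝓝 ((u 0 - u 1) ^ 2)) := by
  have hu₀ : ContinuousWithinAt u (Ici 0) 0 := (continuousWithinAt_Icc_iff_Ici hδ).1 <|
    (hu 0 (Or.inl ⟨le_rfl, hδ.le⟩)).mono subset_union_left
  have hu₁ : ContinuousWithinAt u (Iic 1) 1 := (continuousWithinAt_Icc_iff_Iic (by linarith)).1 <|
    (hu 1 (Or.inr ⟨by linarith, le_rfl⟩)).mono subset_union_right
  have hx := tendsto_div_natCast_mul_atTop_nhds_zero k a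
  have hy : Tendsto (fun i : ℕ => 1 - l / (i * a)) atTop (𝓝 1) := by
    simpa using (tendsto_div_natCast_mul_atTop_nhds_zero l a).const_sub 1
  have hux := hu₀.tendsto.comp (tendsto_nhdsWithin_iff.2
    ⟨hx, Eventually.of_forall fun i => Set.mem_Ici.2 (by positivity)⟩)
  have huy := hu₁.tendsto.comp (tendsto_nhdsWithin_iff.2
    ⟨hy, Eventually.of_forall fun i => Set.mem_Iic.2 (sub_le_self _ (by positivity))⟩)
  exact (hux.sub huy).pow 2

theorem stmt16_general (n : ℕ) (s : ℝ)
    (i0 : ℕ) (hi0 : 2 < i0) (u : ℝ → ℝ)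
    (hu : ContinuousOn u
      (Set.Icc (0 : ℝ) (1 / (i0 : ℝ)) ∪ Set.Icc (1 - 1 / (i0 : ℝ)) 1))
    (lam Lam : ℕ → ℝ) (j : ℕ → ℝ → ℝ → ℝ)
    (hbound : ∀ i : ℕ, 2 < i → ∀ k ∈ Finset.range (2 ^ n), ∀ l ∈ Finset.range (2 ^ n),
      lam i * ((1 - (l : ℝ) / ((i : ℝ) * 2 ^ n)) - (k : ℝ) / ((i : ℝ) * 2 ^ n))
          ^ (-(1 + 2 * s))
        ≤ j i ((k : ℝ) / ((i : ℝ) * 2 ^ n)) (1 - (l : ℝ) / ((i : ℝ) * 2 ^ n)) ∧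
      j i ((k : ℝ) / ((i : ℝ) * 2 ^ n)) (1 - (l : ℝ) / ((i : ℝ) * 2 ^ n))
        ≤ Lam i * ((1 - (l : ℝ) / ((i : ℝ) * 2 ^ n)) - (k : ℝ) / ((i : ℝ) * 2 ^ n))
            ^ (-(1 + 2 * s)))
    (hlam : Filter.Tendsto (fun i : ℕ => lam i / (i : ℝ) ^ 2) Filter.atTop (nhds 1))
    (hLam : Filter.Tendsto (fun i : ℕ => Lam i / (i : ℝ) ^ 2) Filter.atTop (nhds 1)) :
    Filter.Tendsto (fun i : ℕ =>
      2 * ∑ k ∈ Finset.range (2 ^ n), ∑ l ∈ Finset.range (2 ^ n),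
        (u ((k : ℝ) / ((i : ℝ) * 2 ^ n)) - u (1 - (l : ℝ) / ((i : ℝ) * 2 ^ n))) ^ 2
          * j i ((k : ℝ) / ((i : ℝ) * 2 ^ n)) (1 - (l : ℝ) / ((i : ℝ) * 2 ^ n))
          * (1 / ((i : ℝ) * 2 ^ n)) * (1 / ((i : ℝ) * 2 ^ n)))
      Filter.atTop (nhds (2 * (u 0 - u 1) ^ 2)) := by
  have hterm : ∀ k ∈ range (2 ^ n), ∀ l ∈ range (2 ^ n), Tendsto (fun i : ℕ =>
      (u ((k : ℝ) / ((i : ℝ) * 2 ^ n)) - u (1 - (l : ℝ) / ((i : ℝ) * 2 ^ n))) ^ 2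
        * j i ((k : ℝ) / ((i : ℝ) * 2 ^ n)) (1 - (l : ℝ) / ((i : ℝ) * 2 ^ n))
        * (1 / ((i : ℝ) * 2 ^ n)) * (1 / ((i : ℝ) * 2 ^ n)))
      atTop (𝓝 ((u 0 - u 1) ^ 2 * ((2 ^ n) ^ 2)⁻¹)) := by
    intro k hk l hl
    have hu' := tendsto_sq_sub_of_continuousOn_Icc_union (by positivity) hu k l
      (by positivity : (0 : ℝ) ≤ 2 ^ n)
    have hx := tendsto_div_natCast_mul_atTop_nhds_zero k (2 ^ n)
    have hy := tendsto_div_natCast_mul_atTop_nhds_zero l (2 ^ n)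
    have hd : Tendsto (fun i : ℕ => (1 - (l : ℝ) / (i * 2 ^ n)) - k / (i * 2 ^ n)) atTop
        (𝓝 1) := by
      simpa using (hy.const_sub 1).sub hx
    have hj := tendsto_div_of_mul_le_of_le_mul hlam hLam
      (hd.rpow_const (p := -(1 + 2 * s)) (Or.inl one_ne_zero))
      (eventually_gt_atTop 0 |>.mono fun i hi => by positivity)
      (eventually_gt_atTop 2 |>.mono fun i hi => hbound i hi k hk l hl)
    convert hu'.mul ((hj.mul_const ((2 ^ n) ^ 2)⁻¹)) using 1
    · ext i; ring
    · rw [Real.one_rpow, one_mul, one_mul]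
  convert ((tendsto_finsetSum _ fun k hk => tendsto_finsetSum _ fun l hl =>
    hterm k hk l hl).const_mul 2) using 2
  simp only [sum_const, card_range, nsmul_eq_mul, Nat.cast_pow, Nat.cast_ofNat]
  field_simp

theorem stmt16 (n : ℕ) (s : ℝ) (hs : 0 < s) (hs1 : s < 1)
    (i0 : ℕ) (hi0 : 2 < i0) (u : ℝ → ℝ)
    (hu : ContinuousOn u
      (Set.Icc (0 : ℝ) (1 / (i0 : ℝ)) ∪ Set.Icc (1 - 1 / (i0 : ℝ)) 1))
    (lam Lam : ℕ → ℝ) (j : ℕ → ℝ → ℝ → ℝ)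
    (hbound : ∀ i : ℕ, 2 < i → ∀ k ∈ Finset.range (2 ^ n), ∀ l ∈ Finset.range (2 ^ n),
      lam i * ((1 - (l : ℝ) / ((i : ℝ) * 2 ^ n)) - (k : ℝ) / ((i : ℝ) * 2 ^ n))
          ^ (-(1 + 2 * s))
        ≤ j i ((k : ℝ) / ((i : ℝ) * 2 ^ n)) (1 - (l : ℝ) / ((i : ℝ) * 2 ^ n)) ∧
      j i ((k : ℝ) / ((i : ℝ) * 2 ^ n)) (1 - (l : ℝ) / ((i : ℝ) * 2 ^ n))
        ≤ Lam i * ((1 - (l : ℝ) / ((i : ℝ) * 2 ^ n)) - (k : ℝ) / ((i : ℝ) * 2 ^ n))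
            ^ (-(1 + 2 * s)))
    (hlam : Filter.Tendsto (fun i : ℕ => lam i / (i : ℝ) ^ 2) Filter.atTop (nhds 1))
    (hLam : Filter.Tendsto (fun i : ℕ => Lam i / (i : ℝ) ^ 2) Filter.atTop (nhds 1)) :
    Filter.Tendsto (fun i : ℕ =>
      2 * ∑ k ∈ Finset.range (2 ^ n), ∑ l ∈ Finset.range (2 ^ n),
        (u ((k : ℝ) / ((i : ℝ) * 2 ^ n)) - u (1 - (l : ℝ) / ((i : ℝ) * 2 ^ n))) ^ 2
          * j i ((k : ℝ) / ((i : ℝ) * 2 ^ n)) (1 - (l : ℝ) / ((i : ℝ) * 2 ^ n))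
          * (1 / ((i : ℝ) * 2 ^ n)) * (1 / ((i : ℝ) * 2 ^ n)))
      Filter.atTop (nhds (2 * (u 0 - u 1) ^ 2)) :=
  stmt16_general n s i0 hi0 u hu lam Lam j hbound hlam hLam
end

section
/- Let i_0 ∈ ℕ and suppose the limiting nonlocal energies satisfy, for each i ≥ i_0, 2λ_i ∫_0^{1/i} ∫_{1-1/i}^1 (u(x)-u(y))^2 (y-x)^{-1-2s} dy dx ≤ E_i^(∞)(u) ≤ 2Λ_i ∫_0^{1/i} ∫_{1-1/i}^1 (u(x)-u(y))^2 (y-x)^{-1-2s} dy dx, where λ_i/i^2 → 1 and Λ_i/i^2 → 1. If u ∈ L^2 is continuous at 0 and 1 (or more generally if 0 and 1 are Lebesgue points of u and u^2), then lim_{i→∞} E_i^(∞)(u|_{[0,1/i] ∪ [1-1/i,1]}) = 2(u(0) - u(1))^2. -/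
open MeasureTheory Filter Set Topology

/-! The box `(0, 1/i] × (1 - 1/i, 1]` has area `1/i²` and shrinks to the corner `(0, 1)` of the
unit square, where the integrand `(u x - u y)² (y - x)^(-1-2s)` is continuous within the square
(`u` is continuous at `0` and `1`, and `y - x` stays near `1`). Hence `i²` times the double
integral, an average over the box, tends to `(u 0 - u 1)²`. As `λ_i / i² → 1` and `Λ_i / i² → 1`,
both bounds on `E i` tend to `2 (u 0 - u 1)²`, and `E i` is squeezed between them. -/

theorem tendsto_Ioc_prod_Ioc_smallSets (a b : ℝ) :
    Tendsto (fun r : ℝ => Ioc a (a + r) ×ˢ Ioc (b - r) b) (𝓝[>] 0)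
      (𝓝[Ici a ×ˢ Iic b] (a, b)).smallSets := by
  refine tendsto_smallSets_iff.2 fun t ht => ?_
  obtain ⟨ε, hε, hball⟩ := Metric.mem_nhdsWithin_iff.1 ht
  filter_upwards [Ioo_mem_nhdsGT hε] with r hr
  rintro ⟨x, y⟩ ⟨hx, hy⟩
  refine hball ⟨?_, hx.1.le, hy.2⟩
  rw [Metric.mem_ball, Prod.dist_eq, Real.dist_eq, Real.dist_eq]
  exact max_lt (by rw [abs_lt]; constructor <;> linarith [hr.2, hx.2, hx.1])
    (by rw [abs_lt]; constructor <;> linarith [hr.2, hy.2, hy.1])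

section

variable {E : Type*} [NormedAddCommGroup E] [NormedSpace ℝ E] [CompleteSpace E]

theorem tendsto_inv_sq_smul_integral_Ioc_prod_Ioc {f : ℝ × ℝ → E} {a b : ℝ}
    (hf : ContinuousWithinAt f (Ici a ×ˢ Iic b) (a, b))
    (hfm : StronglyMeasurableAtFilter f (𝓝[Ici a ×ˢ Iic b] (a, b))) :
    Tendsto (fun r : ℝ => (r ^ 2)⁻¹ • ∫ x in a..a + r, ∫ y in b - r..b, f (x, y)) (𝓝[>] 0)
      (𝓝 (f (a, b))) := by
  have hS : MeasurableSet (Ici a ×ˢ Iic b) := measurableSet_Ici.prod measurableSet_Iic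
  have := hS.nhdsWithin_isMeasurablyGenerated (a, b)
  have hbox := tendsto_Ioc_prod_Ioc_smallSets a b
  have hvol : ∀ᶠ r in 𝓝[>] (0 : ℝ), volume.real (Ioc a (a + r) ×ˢ Ioc (b - r) b) = r ^ 2 := by
    filter_upwards [self_mem_nhdsWithin] with r (hr : 0 < r)
    rw [Measure.volume_eq_prod, measureReal_prod_prod, Real.volume_real_Ioc_of_le (by linarith),
      Real.volume_real_Ioc_of_le (by linarith)]
    ring
  have hint : ∀ᶠ r in 𝓝[>] (0 : ℝ), IntegrableOn f (Ioc a (a + r) ×ˢ Ioc (b - r) b) :=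
    hbox.eventually (((hf.mono_left inf_le_left).integrableAtFilter_ae hfm
      (volume.finiteAt_nhdsWithin _ _)).eventually)
  -- `∫ p in box r, f p = r² • f (a, b) + o(r²)`; Fubini then turns the box integral into the
  -- iterated one.
  have hsmall :=
    (hf.integral_sub_linear_isLittleO_ae hS hfm hbox _ hvol).tendsto_inv_smul_nhds_zero
  refine tendsto_sub_nhds_zero_iff.1 (hsmall.congr' ?_)
  filter_upwards [self_mem_nhdsWithin, hint] with r (hr : 0 < r) hr_int
  rw [smul_sub, inv_smul_smul₀ (by positivity), Measure.volume_eq_prod,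
    setIntegral_prod f hr_int, intervalIntegral.integral_of_le (by linarith)]
  simp only [intervalIntegral.integral_of_le (show b - r ≤ b by linarith)]

end

theorem continuousWithinAt_sq_sub_mul_rpow_sub {u : ℝ → ℝ} {a b : ℝ} (c : ℝ) (hab : a < b)
    (ha : ContinuousWithinAt u (Ici a) a) (hb : ContinuousWithinAt u (Iic b) b) :
    ContinuousWithinAt (fun p : ℝ × ℝ => (u p.1 - u p.2) ^ 2 * (p.2 - p.1) ^ c)
      (Ici a ×ˢ Iic b) (a, b) := by
  have hfst : ContinuousWithinAt (fun p : ℝ × ℝ => u p.1) (Ici a ×ˢ Iic b) (a, b) :=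
    ha.comp continuousWithinAt_fst fun _ hp => hp.1
  have hsnd : ContinuousWithinAt (fun p : ℝ × ℝ => u p.2) (Ici a ×ˢ Iic b) (a, b) :=
    hb.comp continuousWithinAt_snd fun _ hp => hp.2
  have hrpow : ContinuousAt (fun p : ℝ × ℝ => (p.2 - p.1) ^ c) (a, b) :=
    (continuous_snd.sub continuous_fst).continuousAt.rpow_const (Or.inl (sub_pos.2 hab).ne')
  exact ((hfst.sub hsnd).pow 2).mul hrpow.continuousWithinAt

theorem stronglyMeasurableAtFilter_sq_sub_mul_rpow_sub {u : ℝ → ℝ} {a b : ℝ} (c : ℝ)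
    (hab : a < b) (hu : AEStronglyMeasurable u (volume.restrict (Icc a b))) :
    StronglyMeasurableAtFilter (fun p : ℝ × ℝ => (u p.1 - u p.2) ^ 2 * (p.2 - p.1) ^ c)
      (𝓝[Ici a ×ˢ Iic b] (a, b)) := by
  refine ⟨Icc a b ×ˢ Icc a b, ?_, ?_⟩
  · rw [nhdsWithin_prod_eq]
    exact prod_mem_prod (Icc_mem_nhdsGE hab) (Icc_mem_nhdsLE hab)
  · rw [Measure.volume_eq_prod, ← Measure.prod_restrict]
    exact ((hu.comp_fst.sub hu.comp_snd).pow 2).mul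
      ((measurable_snd.sub measurable_fst).pow_const c).aestronglyMeasurable

theorem stmt17_general (s : ℝ) (i0 : ℕ)
    (u : ℝ → ℝ)
    (hu : MemLp u 2 (volume.restrict (Set.Icc (0 : ℝ) 1)))
    (hu0 : ContinuousWithinAt u (Set.Icc (0 : ℝ) 1) 0)
    (hu1 : ContinuousWithinAt u (Set.Icc (0 : ℝ) 1) 1)
    (E lam Lam : ℕ → ℝ)
    (hE : ∀ i : ℕ, i0 ≤ i →
      2 * lam i * (∫ x in (0 : ℝ)..(1 / (i : ℝ)), ∫ y in (1 - 1 / (i : ℝ))..(1 : ℝ),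
          (u x - u y) ^ 2 * (y - x) ^ (-(1 + 2 * s))) ≤ E i ∧
      E i ≤ 2 * Lam i * (∫ x in (0 : ℝ)..(1 / (i : ℝ)), ∫ y in (1 - 1 / (i : ℝ))..(1 : ℝ),
          (u x - u y) ^ 2 * (y - x) ^ (-(1 + 2 * s))))
    (hlam : Filter.Tendsto (fun i : ℕ => lam i / (i : ℝ) ^ 2) Filter.atTop (nhds 1))
    (hLam : Filter.Tendsto (fun i : ℕ => Lam i / (i : ℝ) ^ 2) Filter.atTop (nhds 1)) :
    Filter.Tendsto E Filter.atTop (nhds (2 * (u 0 - u 1) ^ 2)) := by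
  set I : ℕ → ℝ := fun i => ∫ x in (0 : ℝ)..(1 / (i : ℝ)), ∫ y in (1 - 1 / (i : ℝ))..(1 : ℝ),
    (u x - u y) ^ 2 * (y - x) ^ (-(1 + 2 * s))
  have hI : Tendsto (fun i : ℕ => (i : ℝ) ^ 2 * I i) atTop (𝓝 ((u 0 - u 1) ^ 2)) := by
    have hbox := tendsto_inv_sq_smul_integral_Ioc_prod_Ioc
      (continuousWithinAt_sq_sub_mul_rpow_sub (-(1 + 2 * s)) zero_lt_one
        ((continuousWithinAt_Icc_iff_Ici zero_lt_one).1 hu0)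
        ((continuousWithinAt_Icc_iff_Iic zero_lt_one).1 hu1))
      (stronglyMeasurableAtFilter_sq_sub_mul_rpow_sub _ zero_lt_one hu.aestronglyMeasurable)
    have hinv := tendsto_inv_atTop_nhdsGT_zero.comp (tendsto_natCast_atTop_atTop (R := ℝ))
    simpa [Function.comp_def, I] using hbox.comp hinv
  have hscale (μ : ℕ → ℝ) (hμ : Tendsto (fun i => μ i / (i : ℝ) ^ 2) atTop (𝓝 1)) :
      Tendsto (fun i => 2 * μ i * I i) atTop (𝓝 (2 * (u 0 - u 1) ^ 2)) := by
    have := (hμ.mul hI).const_mul 2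
    rw [one_mul] at this
    refine this.congr' ?_
    filter_upwards [eventually_ne_atTop 0] with i hi
    field_simp
  exact tendsto_of_tendsto_of_tendsto_of_le_of_le' (hscale lam hlam) (hscale Lam hLam)
    (eventually_atTop.2 ⟨i0, fun i hi => (hE i hi).1⟩)
    (eventually_atTop.2 ⟨i0, fun i hi => (hE i hi).2⟩)

theorem stmt17 (s : ℝ) (hs : 0 < s) (hs1 : s < 1) (i0 : ℕ)
    (u : ℝ → ℝ)
    (hu : MemLp u 2 (volume.restrict (Set.Icc (0 : ℝ) 1)))
    (hu0 : ContinuousWithinAt u (Set.Icc (0 : ℝ) 1) 0)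
    (hu1 : ContinuousWithinAt u (Set.Icc (0 : ℝ) 1) 1)
    (E lam Lam : ℕ → ℝ)
    (hE : ∀ i : ℕ, i0 ≤ i →
      2 * lam i * (∫ x in (0 : ℝ)..(1 / (i : ℝ)), ∫ y in (1 - 1 / (i : ℝ))..(1 : ℝ),
          (u x - u y) ^ 2 * (y - x) ^ (-(1 + 2 * s))) ≤ E i ∧
      E i ≤ 2 * Lam i * (∫ x in (0 : ℝ)..(1 / (i : ℝ)), ∫ y in (1 - 1 / (i : ℝ))..(1 : ℝ),
          (u x - u y) ^ 2 * (y - x) ^ (-(1 + 2 * s))))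
    (hlam : Filter.Tendsto (fun i : ℕ => lam i / (i : ℝ) ^ 2) Filter.atTop (nhds 1))
    (hLam : Filter.Tendsto (fun i : ℕ => Lam i / (i : ℝ) ^ 2) Filter.atTop (nhds 1)) :
    Filter.Tendsto E Filter.atTop (nhds (2 * (u 0 - u 1) ^ 2)) :=
  stmt17_general s i0 u hu hu0 hu1 E lam Lam hE hlam hLam
end
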